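/- arXiv:0708.2292 — 2 statements merged into one kernel-verified Lean document; each statement's English description precedes it below -/
import Mathlib

section
/- Let H be a bounded self-adjoint operator on a complex Hilbert space and let A, B be bounded operators with ‖A‖ ≤ 1 and ‖B‖ ≤ 1. Let L ≥ 1, s > 0, and 0 < m′ < m be reals. Suppose E₀ ∈ ℝ satisfies dist(E₀, σ(H)) > L^{−s} (so in particular E₀ is not in the spectrum σ(H)) and ‖A (H − E₀)^{−1} B‖ ≤ e^{−mL/2}. Set δ = (e^{−m′L/2} − e^{−mL/2}) / (2 L^{2s}). Then for every real E with |E − E₀| ≤ δ, E ∉ σ(H) and ‖A (H − E)^{−1} B‖ ≤ e^{−m′L/2}. -/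
/-! For a normal operator the functional calculus gives `‖(H - z)⁻¹‖ ≤ dist(z, σ(H))⁻¹`.
Since `δ ≤ L^{-s}/2`, moving from `E₀` to `E` keeps `dist(E, σ(H)) > L^{-s}/2`, so
`‖(H - E)⁻¹‖ ≤ 2L^s` and `‖(H - E₀)⁻¹‖ ≤ L^s`. The first resolvent identity
`(H - E)⁻¹ = (H - E₀)⁻¹ + (E - E₀)(H - E)⁻¹(H - E₀)⁻¹` then bounds `‖A (H - E)⁻¹ B‖` by
`e^{-mL/2} + δ · 2L^{2s} = e^{-m'L/2}`. -/

open Metric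
open scoped Ring

section Resolvent

variable {𝕜 A : Type*} [NormedField 𝕜] [SeminormedRing A] [NormedAlgebra 𝕜 A]

lemma isUnit_sub_smul_one_of_notMem_spectrum {a : A} {z : 𝕜} (hz : z ∉ spectrum 𝕜 a) :
    IsUnit (a - z • 1) := by
  rw [spectrum.notMem_iff, Algebra.algebraMap_eq_smul_one] at hz
  simpa using hz.neg

lemma inverse_sub_smul_one_sub_inverse {a : A} {z z₀ : 𝕜} (hz : z ∉ spectrum 𝕜 a)
    (hz₀ : z₀ ∉ spectrum 𝕜 a) :
    (a - z • 1)⁻¹ʳ - (a - z₀ • 1)⁻¹ʳ = (z - z₀) • ((a - z • 1)⁻¹ʳ * (a - z₀ • 1)⁻¹ʳ) := by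
  rw [Ring.inverse_sub_inverse (iff_of_true (isUnit_sub_smul_one_of_notMem_spectrum hz)
    (isUnit_sub_smul_one_of_notMem_spectrum hz₀))]
  rw [show a - z₀ • (1 : A) - (a - z • 1) = (z - z₀) • 1 by rw [sub_smul]; abel,
    mul_smul_comm, mul_one, smul_mul_assoc]

lemma norm_mul_inverse_sub_smul_one_mul_le (a b c : A) {z z₀ : 𝕜} (hz : z ∉ spectrum 𝕜 a)
    (hz₀ : z₀ ∉ spectrum 𝕜 a) :
    ‖b * (a - z • 1)⁻¹ʳ * c‖ ≤ ‖b * (a - z₀ • 1)⁻¹ʳ * c‖ +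
      ‖z - z₀‖ * (‖b‖ * ‖(a - z • 1)⁻¹ʳ‖ * ‖(a - z₀ • 1)⁻¹ʳ‖ * ‖c‖) := by
  have hsplit : b * (a - z • 1)⁻¹ʳ * c = b * (a - z₀ • 1)⁻¹ʳ * c +
      (z - z₀) • (b * ((a - z • 1)⁻¹ʳ * (a - z₀ • 1)⁻¹ʳ) * c) := by
    have h := inverse_sub_smul_one_sub_inverse hz hz₀
    rw [sub_eq_iff_eq_add'] at h
    conv_lhs => rw [h]
    simp only [mul_add, add_mul, mul_smul_comm, smul_mul_assoc]
  calc ‖b * (a - z • 1)⁻¹ʳ * c‖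
      ≤ ‖b * (a - z₀ • 1)⁻¹ʳ * c‖ +
          ‖z - z₀‖ * ‖b * ((a - z • 1)⁻¹ʳ * (a - z₀ • 1)⁻¹ʳ) * c‖ := by
        rw [hsplit]
        exact (norm_add_le _ _).trans (by gcongr; exact norm_smul_le _ _)
    _ ≤ _ := by
        gcongr
        grw [norm_mul₃_le, norm_mul_le, ← mul_assoc]

end Resolvent

lemma Metric.notMem_of_infDist_pos {α : Type*} [PseudoMetricSpace α] {x : α} {s : Set α}
    (h : 0 < infDist x s) : x ∉ s :=
  fun hx ↦ h.ne' (infDist_zero_of_mem hx)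

lemma IsStarNormal.norm_inverse_sub_smul_one_le {A : Type*} [CStarAlgebra A] (a : A)
    [IsStarNormal a] {z : ℂ} {r : ℝ} (hr : 0 < r) (hz : r ≤ infDist z (spectrum ℂ a)) :
    ‖(a - z • 1)⁻¹ʳ‖ ≤ r⁻¹ := by
  have hne : ∀ x ∈ spectrum ℂ a, x - z ≠ 0 := fun x hx h ↦
    notMem_of_infDist_pos (hr.trans_le hz) (sub_eq_zero.mp h ▸ hx)
  have hcfc : a - z • 1 = cfc (fun x : ℂ ↦ x - z) a := by
    rw [cfc_sub _ _ a, cfc_id' ℂ a, cfc_const z a, Algebra.algebraMap_eq_smul_one]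
  rw [hcfc, ← cfc_inv _ a hne]
  refine norm_cfc_le (by positivity) fun x hx ↦ ?_
  rw [norm_inv, ← dist_eq_norm, dist_comm]
  exact inv_anti₀ hr (hz.trans (infDist_le_dist_of_mem hx))

lemma energy_window_le {L s m m' : ℝ} (hL : 1 ≤ L) (hs : 0 ≤ s) (hm' : 0 ≤ m') :
    (Real.exp (-m' * L / 2) - Real.exp (-m * L / 2)) / (2 * L ^ (2 * s)) ≤ L ^ (-s) / 2 := by
  have hLs : 1 ≤ L ^ s := Real.one_le_rpow hL hs
  have hnum : Real.exp (-m' * L / 2) - Real.exp (-m * L / 2) ≤ L ^ s := by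
    have : Real.exp (-m' * L / 2) ≤ 1 := Real.exp_le_one_iff.mpr (by nlinarith)
    linarith [Real.exp_pos (-m * L / 2)]
  calc (Real.exp (-m' * L / 2) - Real.exp (-m * L / 2)) / (2 * L ^ (2 * s))
      ≤ L ^ s / (2 * (L ^ s) ^ 2) := by
        rw [mul_comm 2 s, Real.rpow_mul (by linarith), Real.rpow_two]
        gcongr
    _ = L ^ (-s) / 2 := by
        rw [Real.rpow_neg (by linarith)]
        field_simp

theorem stmt_3_general {𝓗 : Type*} [NormedAddCommGroup 𝓗] [InnerProductSpace ℂ 𝓗]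
    [CompleteSpace 𝓗]
    (H A B : 𝓗 →L[ℂ] 𝓗) (hH : IsSelfAdjoint H) (hA : ‖A‖ ≤ 1) (hB : ‖B‖ ≤ 1)
    (L s m m' : ℝ) (hL : 1 ≤ L) (hs : 0 < s) (hm' : 0 < m')
    (E₀ : ℝ)
    (hdist : L ^ (-s) < Metric.infDist ((E₀ : ℂ)) (spectrum ℂ H))
    (hreg : ‖A * Ring.inverse (H - (E₀ : ℂ) • 1) * B‖ ≤ Real.exp (-m * L / 2)) :
    ∀ E : ℝ, |E - E₀| ≤ (Real.exp (-m' * L / 2) - Real.exp (-m * L / 2)) / (2 * L ^ (2 * s)) →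
      (E : ℂ) ∉ spectrum ℂ H ∧
      ‖A * Ring.inverse (H - (E : ℂ) • 1) * B‖ ≤ Real.exp (-m' * L / 2) := by
  intro E hE
  have hLs : L ^ (-s) = (L ^ s)⁻¹ := Real.rpow_neg (by linarith) s
  have hdistE : L ^ (-s) / 2 < infDist (E : ℂ) (spectrum ℂ H) := by
    have htri := infDist_le_infDist_add_dist (x := (E₀ : ℂ)) (y := (E : ℂ)) (s := spectrum ℂ H)
    rw [Complex.dist_eq, ← Complex.ofReal_sub, Complex.norm_real, Real.norm_eq_abs,
      abs_sub_comm] at htri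
    linarith [energy_window_le (m := m) hL hs.le hm'.le]
  have hEσ := notMem_of_infDist_pos (lt_trans (by positivity) hdistE)
  have hE₀σ := notMem_of_infDist_pos (lt_trans (by positivity) hdist)
  refine ⟨hEσ, ?_⟩
  have := hH.isStarNormal
  have hR : ‖(H - (E : ℂ) • 1)⁻¹ʳ‖ ≤ 2 * L ^ s := by
    simpa [hLs] using IsStarNormal.norm_inverse_sub_smul_one_le H (by positivity) hdistE.le
  have hR₀ : ‖(H - (E₀ : ℂ) • 1)⁻¹ʳ‖ ≤ L ^ s := by
    simpa [hLs] using IsStarNormal.norm_inverse_sub_smul_one_le H (by positivity) hdist.le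
  calc ‖A * (H - (E : ℂ) • 1)⁻¹ʳ * B‖
      ≤ ‖A * (H - (E₀ : ℂ) • 1)⁻¹ʳ * B‖ + ‖(E : ℂ) - E₀‖ *
          (‖A‖ * ‖(H - (E : ℂ) • 1)⁻¹ʳ‖ * ‖(H - (E₀ : ℂ) • 1)⁻¹ʳ‖ * ‖B‖) :=
        norm_mul_inverse_sub_smul_one_mul_le H A B hEσ hE₀σ
    _ ≤ Real.exp (-m * L / 2) + (Real.exp (-m' * L / 2) - Real.exp (-m * L / 2)) /
          (2 * L ^ (2 * s)) * (1 * (2 * L ^ s) * L ^ s * 1) := by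
        rw [← Complex.ofReal_sub, Complex.norm_real, Real.norm_eq_abs]
        gcongr
        exact (abs_nonneg _).trans hE
    _ = Real.exp (-m' * L / 2) := by
        rw [two_mul s, Real.rpow_add (by linarith)]
        field_simp
        ring

/-- Energy-perturbation step of the multiscale analysis: if `H` is a bounded
self-adjoint operator on a complex Hilbert space, `‖A‖, ‖B‖ ≤ 1`, `L ≥ 1`, `s > 0`,
`0 < m′ < m`, `dist(E₀, σ(H)) > L^{−s}` and `‖A (H − E₀)⁻¹ B‖ ≤ e^{−mL/2}`, then for
every `E` with `|E − E₀| ≤ δ := (e^{−m′L/2} − e^{−mL/2})/(2L^{2s})` one has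
`E ∉ σ(H)` and `‖A (H − E)⁻¹ B‖ ≤ e^{−m′L/2}`. -/
theorem stmt_3 {𝓗 : Type*} [NormedAddCommGroup 𝓗] [InnerProductSpace ℂ 𝓗]
    [CompleteSpace 𝓗]
    (H A B : 𝓗 →L[ℂ] 𝓗) (hH : IsSelfAdjoint H) (hA : ‖A‖ ≤ 1) (hB : ‖B‖ ≤ 1)
    (L s m m' : ℝ) (hL : 1 ≤ L) (hs : 0 < s) (hm' : 0 < m') (hm'm : m' < m)
    (E₀ : ℝ)
    (hdist : L ^ (-s) < Metric.infDist ((E₀ : ℂ)) (spectrum ℂ H))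
    (hE₀ : (E₀ : ℂ) ∉ spectrum ℂ H)
    (hreg : ‖A * Ring.inverse (H - (E₀ : ℂ) • 1) * B‖ ≤ Real.exp (-m * L / 2)) :
    ∀ E : ℝ, |E - E₀| ≤ (Real.exp (-m' * L / 2) - Real.exp (-m * L / 2)) / (2 * L ^ (2 * s)) →
      (E : ℂ) ∉ spectrum ℂ H ∧
      ‖A * Ring.inverse (H - (E : ℂ) • 1) * B‖ ≤ Real.exp (-m' * L / 2) :=
  stmt_3_general H A B hH hA hB L s m m' hL hs hm' E₀ hdist hreg
end

section
/- Let d ≥ 1 be an integer and let γ > 0, θ′ > 0, s > 0, and α > 1 be reals. Then there exist c > 0 and ℓ₀ ≥ 3 (depending only on d, γ, θ′, s, α) such that for all reals ℓ ≥ ℓ₀, all reals L with ℓ^α/2 ≤ L ≤ ℓ^α, and all reals m ≥ 2θ′ (log ℓ)/ℓ, the real number M := m·(1 − 3ℓ/L) − (2/L)·( s·log L + d·log(L/ℓ + 2) + (L/ℓ − 3)·log(3^d γ) ) satisfies both M ≥ m·(1 − c/log ℓ) and M ≥ 2θ′·(log L)/L. -/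
/-!
Everything rests on `ℓ log ℓ = o(ℓ^α)` together with `ℓ^α/2 ≤ L ≤ ℓ^α`. The relative loss `3ℓ/L`
is then `o(1/log ℓ)`. The additive error is at most `2(|s| + d) log L/L + 2|log(3^d γ)|/ℓ`,
where `log L/L = O(log ℓ/ℓ^α) = o(1/ℓ)`; so it is below `(2|log(3^d γ)| + 1)/ℓ`, which is the
fraction `c/(2 log ℓ)` of the lower bound `2θ′ log ℓ/ℓ` on `m` for `c = (2|log(3^d γ)| + 1)/θ′`.
For the second bound, `2θ′ log L/L = o(1/ℓ)` is below `(2θ′ log ℓ/ℓ)(1 - c/log ℓ)`.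
-/

open Filter Real

noncomputable def massError (d : ℕ) (γ s ℓ L : ℝ) : ℝ :=
  (2 / L) * (s * log L + d * log (L / ℓ + 2) + (L / ℓ - 3) * log ((3 : ℝ) ^ d * γ))

noncomputable def newMass (d : ℕ) (γ s m ℓ L : ℝ) : ℝ :=
  m * (1 - 3 * ℓ / L) - massError d γ s ℓ L

lemma eventually_mul_self_mul_log_le_rpow {α : ℝ} (hα : 1 < α) (C : ℝ) :
    ∀ᶠ x : ℝ in atTop, C * (x * log x) ≤ x ^ α := by
  filter_upwards [((isLittleO_log_rpow_atTop (sub_pos.2 hα)).const_mul_left C).bound one_pos,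
    eventually_gt_atTop 0] with x hx hx₀
  rw [one_mul, norm_eq_abs, norm_eq_abs, abs_of_pos (rpow_pos_of_pos hx₀ _)] at hx
  calc C * (x * log x) = x * (C * log x) := by ring
    _ ≤ x * x ^ (α - 1) := mul_le_mul_of_nonneg_left ((le_abs_self _).trans hx) hx₀.le
    _ = x ^ α := by rw [rpow_sub_one hx₀.ne', mul_div_cancel₀ _ hx₀.ne']

lemma div_add_two_le_self {ℓ L : ℝ} (hℓ : 2 ≤ ℓ) (hL : 3 * ℓ ≤ L) : L / ℓ + 2 ≤ L := by
  rw [div_add' _ _ _ (by positivity), div_le_iff₀ (by positivity)]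
  nlinarith

lemma log_div_le_of_le_rpow {α ℓ L : ℝ} (hℓ : 0 < ℓ) (hL : 1 ≤ L) (hL₁ : ℓ ^ α / 2 ≤ L)
    (hL₂ : L ≤ ℓ ^ α) : log L / L ≤ 2 * α * log ℓ / ℓ ^ α := by
  have hlog : log L ≤ α * log ℓ := by
    rw [← log_rpow hℓ]
    exact log_le_log (by linarith) hL₂
  calc log L / L ≤ log L / (ℓ ^ α / 2) :=
        div_le_div_of_nonneg_left (log_nonneg hL) (by positivity) hL₁
    _ ≤ α * log ℓ / (ℓ ^ α / 2) := div_le_div_of_nonneg_right hlog (by positivity)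
    _ = 2 * α * log ℓ / ℓ ^ α := by field_simp

lemma massError_le (d : ℕ) (γ s : ℝ) {ℓ L : ℝ} (hℓ : 2 ≤ ℓ) (hL : 3 * ℓ ≤ L) :
    massError d γ s ℓ L ≤ 2 * (|s| + d) * (log L / L) + 2 * |log ((3 : ℝ) ^ d * γ)| / ℓ := by
  set K := log ((3 : ℝ) ^ d * γ)
  have hL₀ : 0 < L := by linarith
  have hlogL : 0 ≤ log L := log_nonneg (by linarith)
  have hlog₂ : log (L / ℓ + 2) ≤ log L :=
    log_le_log (by positivity) (div_add_two_le_self hℓ hL)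
  have hratio : 3 ≤ L / ℓ := by rw [le_div_iff₀ (by linarith)]; linarith
  have hsum : s * log L + d * log (L / ℓ + 2) + (L / ℓ - 3) * K ≤
      (|s| + d) * log L + L / ℓ * |K| := by
    have hs : s * log L ≤ |s| * log L := mul_le_mul_of_nonneg_right (le_abs_self s) hlogL
    have hd : (d : ℝ) * log (L / ℓ + 2) ≤ d * log L :=
      mul_le_mul_of_nonneg_left hlog₂ (Nat.cast_nonneg d)
    have hK : (L / ℓ - 3) * K ≤ (L / ℓ - 3) * |K| :=
      mul_le_mul_of_nonneg_left (le_abs_self K) (by linarith)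
    linarith [abs_nonneg K]
  calc massError d γ s ℓ L ≤ 2 / L * ((|s| + d) * log L + L / ℓ * |K|) :=
        mul_le_mul_of_nonneg_left hsum (by positivity)
    _ = 2 * (|s| + d) * (log L / L) + 2 * |K| / ℓ := by field_simp

lemma massError_le_of_growth (d : ℕ) (γ s : ℝ) {α ℓ L : ℝ} (hℓ : 2 ≤ ℓ)
    (hgrowth : 4 * (|s| + d) * α * (ℓ * log ℓ) ≤ ℓ ^ α) (hL : 3 * ℓ ≤ L)
    (hL₁ : ℓ ^ α / 2 ≤ L) (hL₂ : L ≤ ℓ ^ α) :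
    massError d γ s ℓ L ≤ (2 * |log ((3 : ℝ) ^ d * γ)| + 1) / ℓ := by
  have hℓ₀ : 0 < ℓ := by linarith
  have hlogL_div := log_div_le_of_le_rpow hℓ₀ (by linarith) hL₁ hL₂
  have hsd : 0 ≤ 2 * (|s| + d) := by positivity
  have hmain : 2 * (|s| + d) * (2 * α * log ℓ / ℓ ^ α) ≤ 1 / ℓ := by
    rw [mul_div_assoc', div_le_div_iff₀ (rpow_pos_of_pos hℓ₀ α) hℓ₀]
    linarith
  calc massError d γ s ℓ L
      ≤ 2 * (|s| + d) * (log L / L) + 2 * |log ((3 : ℝ) ^ d * γ)| / ℓ := massError_le d γ s hℓ hL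
    _ ≤ 1 / ℓ + 2 * |log ((3 : ℝ) ^ d * γ)| / ℓ := by
        gcongr
        exact (mul_le_mul_of_nonneg_left hlogL_div hsd).trans hmain
    _ = (2 * |log ((3 : ℝ) ^ d * γ)| + 1) / ℓ := by ring

lemma three_mul_div_le {α c ℓ L : ℝ} (hc : 0 < c) (hℓ : 1 < ℓ)
    (hgrowth : 12 / c * (ℓ * log ℓ) ≤ ℓ ^ α) (hL₁ : ℓ ^ α / 2 ≤ L) :
    3 * ℓ / L ≤ c / (2 * log ℓ) := by
  have hlog : 0 < log ℓ := log_pos hℓ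
  have h : 12 * (ℓ * log ℓ) ≤ c * ℓ ^ α := by
    have := mul_le_mul_of_nonneg_left hgrowth hc.le
    rwa [← mul_assoc, mul_div_cancel₀ _ hc.ne'] at this
  have hL₀ : 0 < L := lt_of_lt_of_le (by positivity) hL₁
  rw [div_le_div_iff₀ hL₀ (by positivity)]
  nlinarith

lemma three_mul_le {α c ℓ L : ℝ} (hc : 0 < c) (hℓ : 1 < ℓ) (hlog : 2 * c ≤ log ℓ)
    (hgrowth : 12 / c * (ℓ * log ℓ) ≤ ℓ ^ α) (hL₁ : ℓ ^ α / 2 ≤ L) : 3 * ℓ ≤ L := by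
  have hL₀ : 0 < L := lt_of_lt_of_le (half_pos (rpow_pos_of_pos (by linarith) α)) hL₁
  have hle : c / (2 * log ℓ) ≤ 1 := by
    rw [div_le_one (by linarith)]; linarith
  exact (div_le_one hL₀).1 ((three_mul_div_le hc hℓ hgrowth hL₁).trans hle)

lemma mul_one_sub_le_newMass (d : ℕ) (γ s : ℝ) {θ' α c ℓ L m : ℝ} (hθ' : 0 < θ') (hc : 0 < c)
    (hθc : 2 * |log ((3 : ℝ) ^ d * γ)| + 1 ≤ θ' * c) (hℓ : 2 ≤ ℓ) (hlog : 2 * c ≤ log ℓ)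
    (hgrowth₁ : 12 / c * (ℓ * log ℓ) ≤ ℓ ^ α)
    (hgrowth₂ : 4 * (|s| + d) * α * (ℓ * log ℓ) ≤ ℓ ^ α) (hL : 3 * ℓ ≤ L)
    (hL₁ : ℓ ^ α / 2 ≤ L) (hL₂ : L ≤ ℓ ^ α) (hm : 2 * θ' * log ℓ / ℓ ≤ m) :
    m * (1 - c / log ℓ) ≤ newMass d γ s m ℓ L := by
  have hℓ₀ : 0 < ℓ := by linarith
  have hlog₀ : 0 < log ℓ := by linarith
  have hm₀ : 0 ≤ m := le_trans (by positivity) hm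
  have hstep : m * (3 * ℓ / L) ≤ m * (c / (2 * log ℓ)) :=
    mul_le_mul_of_nonneg_left (three_mul_div_le hc (by linarith) hgrowth₁ hL₁) hm₀
  have herror : massError d γ s ℓ L ≤ m * (c / (2 * log ℓ)) :=
    calc massError d γ s ℓ L ≤ (2 * |log ((3 : ℝ) ^ d * γ)| + 1) / ℓ :=
          massError_le_of_growth d γ s hℓ hgrowth₂ hL hL₁ hL₂
      _ ≤ θ' * c / ℓ := by gcongr
      _ = 2 * θ' * log ℓ / ℓ * (c / (2 * log ℓ)) := by field_simp
      _ ≤ m * (c / (2 * log ℓ)) := by gcongr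
  have hsplit : m * (1 - c / log ℓ) = m - 2 * (m * (c / (2 * log ℓ))) := by field_simp
  rw [newMass, hsplit]
  linarith

lemma two_mul_log_div_le_mul_one_sub {θ' α c ℓ L m : ℝ} (hθ' : 0 < θ') (hℓ : 0 < ℓ)
    (hlog₁ : 1 ≤ log ℓ) (hlog : 2 * c ≤ log ℓ) (hgrowth : 4 * α * (ℓ * log ℓ) ≤ ℓ ^ α)
    (hL : 1 ≤ L) (hL₁ : ℓ ^ α / 2 ≤ L) (hL₂ : L ≤ ℓ ^ α) (hm : 2 * θ' * log ℓ / ℓ ≤ m) :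
    2 * θ' * log L / L ≤ m * (1 - c / log ℓ) := by
  have hlog₀ : 0 < log ℓ := by linarith
  have hhalf : 1 / 2 ≤ 1 - c / log ℓ := by
    rw [le_sub_comm, div_le_iff₀ hlog₀]; linarith
  have hgrowth' : 4 * α * log ℓ / ℓ ^ α ≤ 1 / ℓ := by
    rw [div_le_div_iff₀ (rpow_pos_of_pos hℓ α) hℓ]; linarith
  calc 2 * θ' * log L / L = 2 * θ' * (log L / L) := by ring
    _ ≤ 2 * θ' * (2 * α * log ℓ / ℓ ^ α) :=
        mul_le_mul_of_nonneg_left (log_div_le_of_le_rpow hℓ hL hL₁ hL₂) (by positivity)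
    _ = θ' * (4 * α * log ℓ / ℓ ^ α) := by ring
    _ ≤ θ' * (log ℓ / ℓ) :=
        mul_le_mul_of_nonneg_left (hgrowth'.trans (div_le_div_of_nonneg_right hlog₁ hℓ.le))
          hθ'.le
    _ = 2 * θ' * log ℓ / ℓ * (1 / 2) := by ring
    _ ≤ m * (1 - c / log ℓ) := by
        gcongr
        exact le_trans (by positivity) hm

theorem stmt_10_general (d : ℕ) (γ θ' s α : ℝ) (hθ' : 0 < θ') (hα : 1 < α) :
    ∃ c : ℝ, 0 < c ∧ ∃ ℓ₀ : ℝ, 3 ≤ ℓ₀ ∧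
      ∀ ℓ : ℝ, ℓ₀ ≤ ℓ → ∀ L : ℝ, ℓ ^ α / 2 ≤ L → L ≤ ℓ ^ α →
        ∀ m : ℝ, 2 * θ' * Real.log ℓ / ℓ ≤ m →
          m * (1 - c / Real.log ℓ) ≤
              m * (1 - 3 * ℓ / L) -
                (2 / L) * (s * Real.log L + d * Real.log (L / ℓ + 2) +
                  (L / ℓ - 3) * Real.log ((3 : ℝ) ^ d * γ)) ∧
          2 * θ' * Real.log L / L ≤
              m * (1 - 3 * ℓ / L) -
                (2 / L) * (s * Real.log L + d * Real.log (L / ℓ + 2) +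
                  (L / ℓ - 3) * Real.log ((3 : ℝ) ^ d * γ)) := by
  set c := (2 * |log ((3 : ℝ) ^ d * γ)| + 1) / θ' with hc_def
  have hc : 0 < c := by positivity
  have hθc : 2 * |log ((3 : ℝ) ^ d * γ)| + 1 ≤ θ' * c := by
    rw [hc_def, mul_div_cancel₀ _ hθ'.ne']
  obtain ⟨ℓ₀, hℓ₀⟩ := ((eventually_mul_self_mul_log_le_rpow hα (12 / c)).and <|
    (eventually_mul_self_mul_log_le_rpow hα (4 * (|s| + d) * α)).and <|
    (eventually_mul_self_mul_log_le_rpow hα (4 * α)).and <|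
    tendsto_log_atTop.eventually_ge_atTop (max (2 * c) 1)).exists_forall_of_atTop
  refine ⟨c, hc, max ℓ₀ 3, le_max_right _ _, fun ℓ hℓ L hL₁ hL₂ m hm => ?_⟩
  obtain ⟨hgrowth₁, hgrowth₂, hgrowth₃, hlog⟩ := hℓ₀ ℓ (le_of_max_le_left hℓ)
  obtain ⟨hlog_c, hlog_one⟩ := max_le_iff.1 hlog
  have hℓ₃ : 3 ≤ ℓ := le_of_max_le_right hℓ
  have hL : 3 * ℓ ≤ L := three_mul_le hc (by linarith) hlog_c hgrowth₁ hL₁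
  have hfirst : m * (1 - c / log ℓ) ≤ newMass d γ s m ℓ L :=
    mul_one_sub_le_newMass d γ s hθ' hc hθc (by linarith) hlog_c hgrowth₁ hgrowth₂ hL hL₁ hL₂ hm
  exact ⟨hfirst, (two_mul_log_div_le_mul_one_sub hθ' (by linarith) hlog_one hlog_c hgrowth₃
    (by linarith) hL₁ hL₂ hm).trans hfirst⟩

/-- Mass decay estimate (bigboxest3) of the multiscale analysis: there exist
`c > 0` and `ℓ₀ ≥ 3` (depending only on `d, γ, θ′, s, α`) such that for `ℓ ≥ ℓ₀`,
`ℓ^α/2 ≤ L ≤ ℓ^α` and `m ≥ 2θ′ log ℓ/ℓ`, the number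
`M := m(1 − 3ℓ/L) − (2/L)(s log L + d log(L/ℓ+2) + (L/ℓ−3) log(3^d γ))`
satisfies `M ≥ m(1 − c/log ℓ)` and `M ≥ 2θ′ log L/L`. -/
theorem stmt_10 (d : ℕ) (hd : 1 ≤ d) (γ θ' s α : ℝ) (hγ : 0 < γ) (hθ' : 0 < θ')
    (hs : 0 < s) (hα : 1 < α) :
    ∃ c : ℝ, 0 < c ∧ ∃ ℓ₀ : ℝ, 3 ≤ ℓ₀ ∧
      ∀ ℓ : ℝ, ℓ₀ ≤ ℓ → ∀ L : ℝ, ℓ ^ α / 2 ≤ L → L ≤ ℓ ^ α →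
        ∀ m : ℝ, 2 * θ' * Real.log ℓ / ℓ ≤ m →
          m * (1 - c / Real.log ℓ) ≤
              m * (1 - 3 * ℓ / L) -
                (2 / L) * (s * Real.log L + d * Real.log (L / ℓ + 2) +
                  (L / ℓ - 3) * Real.log ((3 : ℝ) ^ d * γ)) ∧
          2 * θ' * Real.log L / L ≤
              m * (1 - 3 * ℓ / L) -
                (2 / L) * (s * Real.log L + d * Real.log (L / ℓ + 2) +
                  (L / ℓ - 3) * Real.log ((3 : ℝ) ^ d * γ)) :=
  stmt_10_general d γ θ' s α hθ' hα
end
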